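/- arXiv:0811.1689 — 5 statements merged into one kernel-verified Lean document; each statement's English description precedes it below -/
import Mathlib

section
/- If X is a componentwise solution of the dyadic model with initial condition X^0 having all nonnegative components, then X_n(t) ≥ 0 for all n ≥ 1 and all t ≥ 0. -/
/-- A componentwise solution of the unforced dyadic model: `X 0 ≡ 0` and
`dX_n/dt = k_{n-1} X_{n-1}^2 - k_n X_n X_{n+1}` with `k_n = 2^n`, for `n ≥ 1`,
on the time interval `[0, ∞)`. -/
def IsDyadicSol (X : ℕ → ℝ → ℝ) : Prop :=
  (∀ t : ℝ, 0 ≤ t → X 0 t = 0) ∧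
  ∀ n : ℕ, ∀ t : ℝ, 0 ≤ t →
    HasDerivAt (X (n + 1))
      ((2 : ℝ) ^ n * (X n t) ^ 2 - 2 ^ (n + 1) * X (n + 1) t * X (n + 2) t) t

/-!
Each component obeys a linear differential inequality: for `n ≥ 1`,
`X_n' = k_{n-1} X_{n-1}^2 - k_n X_{n+1} X_n ≥ -a X_n` with the continuous coefficient
`a = k_n X_{n+1}`. Multiplying by the integrating factor `exp (∫ a)` makes `X_n` nondecreasing
after rescaling, so its sign at time `0` persists. Since the source term is a square, no
induction on `n` is needed.
-/

open Set

theorem ContinuousOn.exists_hasDerivAt_Ici {a : ℝ → ℝ} (ha : ContinuousOn a (Ici 0)) :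
    ∃ A : ℝ → ℝ, ∀ t, 0 ≤ t → HasDerivAt A (a t) t := by
  have hext : Continuous fun s => a (max s 0) :=
    ha.comp_continuous (continuous_id.max continuous_const) fun s => le_max_right s 0
  refine ⟨fun t => ∫ s in (0 : ℝ)..t, a (max s 0), fun t ht => ?_⟩
  simpa only [max_eq_left ht] using (hext.integral_hasStrictDerivAt 0 t).hasDerivAt

theorem nonneg_of_neg_mul_le_deriv {f f' a : ℝ → ℝ} (ha : ContinuousOn a (Ici 0))
    (hf : ∀ t, 0 ≤ t → HasDerivAt f (f' t) t) (hf' : ∀ t, 0 ≤ t → -(a t * f t) ≤ f' t)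
    (h0 : 0 ≤ f 0) {t : ℝ} (ht : 0 ≤ t) : 0 ≤ f t := by
  obtain ⟨A, hA⟩ := ha.exists_hasDerivAt_Ici
  set g : ℝ → ℝ := fun s => f s * Real.exp (A s)
  set g' : ℝ → ℝ := fun s => (f' s + a s * f s) * Real.exp (A s)
  have hg : ∀ s, 0 ≤ s → HasDerivAt g (g' s) s := fun s hs =>
    ((hf s hs).mul (hA s hs).exp).congr_deriv (by ring)
  have hg'_nonneg : ∀ s, 0 ≤ s → 0 ≤ g' s := fun s hs =>
    mul_nonneg (by linarith [hf' s hs]) (Real.exp_pos _).le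
  have hmono : MonotoneOn g (Ici 0) := by
    refine monotoneOn_of_hasDerivWithinAt_nonneg (f' := g') (convex_Ici 0)
      (fun s hs => (hg s hs).continuousAt.continuousWithinAt) ?_ ?_ <;> rw [interior_Ici]
    · exact fun s hs => (hg s (le_of_lt hs)).hasDerivWithinAt
    · exact fun s hs => hg'_nonneg s (le_of_lt hs)
  have hgt : 0 ≤ f t * Real.exp (A t) :=
    (mul_nonneg h0 (Real.exp_pos _).le).trans (hmono self_mem_Ici ht ht)
  exact nonneg_of_mul_nonneg_left hgt (Real.exp_pos _)

/-- If the initial condition has all nonnegative components, then any componentwise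
solution stays nonnegative. -/
theorem dyadic_positivity (X : ℕ → ℝ → ℝ) (hX : IsDyadicSol X)
    (h0 : ∀ n : ℕ, 0 ≤ X n 0) :
    ∀ n : ℕ, 1 ≤ n → ∀ t : ℝ, 0 ≤ t → 0 ≤ X n t := by
  intro n hn t ht
  obtain ⟨m, rfl⟩ := Nat.exists_eq_add_of_le' hn
  have hcont : ContinuousOn (X (m + 2)) (Ici 0) := fun s hs =>
    (hX.2 (m + 1) s hs).continuousAt.continuousWithinAt
  refine nonneg_of_neg_mul_le_deriv (a := fun s => 2 ^ (m + 1) * X (m + 2) s)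
    (continuousOn_const.mul hcont) (hX.2 m) (fun s _ => ?_) (h0 (m + 1)) ht
  nlinarith [sq_nonneg (X m s), pow_pos (two_pos (α := ℝ)) m]
end

section
/- Let X be a positive componentwise solution of the dyadic model. If X_n^0 > 0 for some n ≥ 1, then X_m(t) > 0 for every m ≥ n and every t > 0. -/
open Real Set

section ComparisonODE

variable {x p q : ℝ → ℝ} {s t M : ℝ}

lemma hasDerivAt_exp_mul_mul (hx : HasDerivAt x (p s - q s * x s) s) :
    HasDerivAt (fun u => exp (M * u) * x u) (exp (M * s) * (p s + (M - q s) * x s)) s := by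
  have hexp : HasDerivAt (fun u => exp (M * u)) (exp (M * s) * M) s := by
    simpa using ((hasDerivAt_id s).const_mul M).exp
  exact (hexp.mul hx).congr_deriv (by ring)

theorem pos_of_hasDerivAt_sub_mul (ht : 0 < t)
    (hx : ∀ s ∈ Icc 0 t, HasDerivAt x (p s - q s * x s) s)
    (hx_nonneg : ∀ s ∈ Icc 0 t, 0 ≤ x s) (hp : ∀ s ∈ Icc 0 t, 0 ≤ p s)
    (hqM : ∀ s ∈ Icc 0 t, q s ≤ M)
    (H : 0 < x 0 ∨ ∀ s ∈ Ioo 0 t, 0 < p s) : 0 < x t := by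
  set F : ℝ → ℝ := fun u => exp (M * u) * x u
  have hF : ∀ s ∈ Icc 0 t, HasDerivAt F (exp (M * s) * (p s + (M - q s) * x s)) s :=
    fun s hs => hasDerivAt_exp_mul_mul (hx s hs)
  have hF_ge : ∀ s ∈ Icc 0 t, exp (M * s) * p s ≤ exp (M * s) * (p s + (M - q s) * x s) :=
    fun s hs => by
      have : 0 ≤ (M - q s) * x s := mul_nonneg (sub_nonneg.2 (hqM s hs)) (hx_nonneg s hs)
      gcongr
      linarith
  have hF_cont : ContinuousOn F (Icc 0 t) := fun s hs => (hF s hs).continuousAt.continuousWithinAt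
  have hF_int : ∀ s ∈ interior (Icc 0 t),
      HasDerivWithinAt F (exp (M * s) * (p s + (M - q s) * x s)) (interior (Icc 0 t)) s :=
    fun s hs => (hF s (interior_subset hs)).hasDerivWithinAt
  have h0 : 0 ∈ Icc 0 t := left_mem_Icc.2 ht.le
  have hFt : 0 < F t := by
    rcases H with hx0 | hp_pos
    · have hmono := monotoneOn_of_hasDerivWithinAt_nonneg (convex_Icc 0 t) hF_cont hF_int
        fun s hs => (mul_nonneg (exp_pos _).le (hp s (interior_subset hs))).trans
          (hF_ge s (interior_subset hs))
      have : F 0 ≤ F t := hmono h0 (right_mem_Icc.2 ht.le) ht.le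
      have : 0 < F 0 := by simpa [F] using hx0
      linarith
    · have hmono := strictMonoOn_of_hasDerivWithinAt_pos (convex_Icc 0 t) hF_cont hF_int
        fun s hs => by
          rw [interior_Icc] at hs
          exact (mul_pos (exp_pos _) (hp_pos s hs)).trans_le (hF_ge s (Ioo_subset_Icc_self hs))
      have : F 0 < F t := hmono h0 (right_mem_Icc.2 ht.le) ht
      have : 0 ≤ F 0 := by simpa [F] using hx_nonneg 0 h0
      linarith
  exact pos_of_mul_pos_right hFt (exp_pos _).le

end ComparisonODE

theorem IsDyadicSol.pos_succ {X : ℕ → ℝ → ℝ} (hX : IsDyadicSol X)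
    (hpos : ∀ n : ℕ, ∀ t : ℝ, 0 ≤ t → 0 ≤ X n t) {k : ℕ} {t : ℝ} (ht : 0 < t)
    (H : 0 < X (k + 1) 0 ∨ ∀ s ∈ Ioo 0 t, 0 < X k s) : 0 < X (k + 1) t := by
  have hq_cont : ContinuousOn (fun s => (2 : ℝ) ^ (k + 1) * X (k + 2) s) (Icc 0 t) :=
    fun s hs => ((hX.2 (k + 1) s hs.1).continuousAt.const_mul _).continuousWithinAt
  obtain ⟨M, hM⟩ := isCompact_Icc.bddAbove_image hq_cont
  refine pos_of_hasDerivAt_sub_mul (p := fun s => 2 ^ k * X k s ^ 2) ht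
    (fun s hs => by simpa only [mul_assoc, mul_comm (X (k + 2) s)] using hX.2 k s hs.1)
    (fun s hs => hpos _ s hs.1) (fun s _ => by positivity)
    (fun s hs => hM (mem_image_of_mem _ hs)) ?_
  refine H.imp_right fun hXk s hs => ?_
  have := hXk s hs
  positivity

/-- If some initial component is strictly positive, then all later components are
strictly positive for all positive times. -/
theorem dyadic_strict_positivity (X : ℕ → ℝ → ℝ) (hX : IsDyadicSol X)
    (hpos : ∀ n : ℕ, ∀ t : ℝ, 0 ≤ t → 0 ≤ X n t)
    (n : ℕ) (hn : 1 ≤ n) (h0 : 0 < X n 0) :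
    ∀ m : ℕ, n ≤ m → ∀ t : ℝ, 0 < t → 0 < X m t := by
  obtain ⟨k, rfl⟩ := Nat.exists_eq_add_one.2 hn
  intro m hm
  induction m, hm using Nat.le_induction with
  | base => exact fun t ht => hX.pos_succ hpos ht (Or.inl h0)
  | succ m _ ih => exact fun t ht => hX.pos_succ hpos ht (Or.inr fun s hs => ih s hs.1)
end

section
/- Suppose that for all positive finite-energy solutions X of the dyadic model with |X(0)|_{l²} = 1 there exists a fixed time t̄ > 0 such that |X(t̄)|²_{l²} ≤ 1/4, and that the energy |X(t)|²_{l²} is nonincreasing in t. Then every positive finite-energy solution with |X(0)|_{l²}² = 1 satisfies |X(t)|²_{l²} ≤ 4 t̄² / t² for all t ≥ 2 t̄. -/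
/-- The energy `|X(t)|²_{l²}` of a solution at time `t`. -/
noncomputable def energy (X : ℕ → ℝ → ℝ) (t : ℝ) : ℝ := ∑' n : ℕ, (X n t) ^ 2

/-- A positive finite-energy solution. -/
def IsPosFE (X : ℕ → ℝ → ℝ) : Prop :=
  IsDyadicSol X ∧ (∀ n : ℕ, ∀ t : ℝ, 0 ≤ t → 0 ≤ X n t) ∧
    ∀ t : ℝ, 0 ≤ t → Summable fun n : ℕ => (X n t) ^ 2

/-!
If `X` has energy `a²` at time `s`, then `u ↦ a⁻¹ X(a⁻¹ u + s)` is a positive finite-energy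
solution of unit initial energy, so the halving hypothesis shows that the norm `g = √energy`
halves between `s` and `s + t̄ / g(s)`. Iterating from time `0` produces times
`T₀ = 0 < T₁ < ⋯`, at least `t̄` apart since `g ≤ 1`, with `g(Tₖ) Tₖ ≤ t̄`; on `[Tₖ, Tₖ₊₁]`
monotonicity then gives `g(t) t ≤ g(Tₖ) Tₖ₊₁ ≤ 2 t̄`, which squares to the bound.
-/

open Set

section Halving

variable {g : ℝ → ℝ} {τ : ℝ}

lemma exists_next_halving_time (hτ : 0 ≤ τ) (hanti : AntitoneOn g (Ici 0)) (h0 : g 0 ≤ 1)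
    (hhalf : ∀ s, 0 ≤ s → 0 < g s → g (s + τ / g s) ≤ g s / 2)
    {T : ℝ} (hT : 0 ≤ T) (hgT : g T * T ≤ τ) :
    ∃ T' ≥ T + τ, g T' * T' ≤ τ ∧ ∀ t ∈ Icc T T', g t * t ≤ 2 * τ := by
  have hle : ∀ t, T ≤ t → g t ≤ g T := fun t ht => hanti hT (hT.trans ht) ht
  rcases le_or_gt (g T) 0 with hnonpos | hpos
  · have hvanish : ∀ t, T ≤ t → g t * t ≤ 0 := fun t ht =>
      mul_nonpos_of_nonpos_of_nonneg ((hle t ht).trans hnonpos) (hT.trans ht)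
    refine ⟨T + τ, le_rfl, ?_, fun t ht => ?_⟩
    · linarith [hvanish (T + τ) (by linarith)]
    · linarith [hvanish t ht.1]
  · set a := g T
    have ha1 : a ≤ 1 := (hanti self_mem_Ici hT hT).trans h0
    have hstep : a * (T + τ / a) = a * T + τ := by field_simp
    refine ⟨T + τ / a, by linarith [le_div_self hτ hpos ha1], ?_, fun t ht => ?_⟩
    · calc g (T + τ / a) * (T + τ / a) ≤ a / 2 * (T + τ / a) :=
          mul_le_mul_of_nonneg_right (hhalf T hT hpos) (by positivity)
        _ = (a * T + τ) / 2 := by rw [div_mul_eq_mul_div, hstep]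
        _ ≤ τ := by linarith
    · calc g t * t ≤ a * (T + τ / a) := by
            gcongr
            · exact hT.trans ht.1
            · exact hle t ht.1
            · exact ht.2
        _ ≤ 2 * τ := by linarith

lemma exists_halving_time_ge (hτ : 0 ≤ τ) (hanti : AntitoneOn g (Ici 0)) (h0 : g 0 ≤ 1)
    (hhalf : ∀ s, 0 ≤ s → 0 < g s → g (s + τ / g s) ≤ g s / 2) (k : ℕ) :
    ∃ T ≥ k * τ, g T * T ≤ τ ∧ ∀ t ∈ Icc 0 T, g t * t ≤ 2 * τ := by
  induction k with
  | zero =>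
    refine ⟨0, by simp, by simpa using hτ, fun t ht => ?_⟩
    rw [le_antisymm ht.2 ht.1]
    linarith
  | succ k ih =>
    obtain ⟨T, hkT, hgT, hbound⟩ := ih
    have hT : 0 ≤ T := le_trans (by positivity) hkT
    obtain ⟨T', hTT', hgT', hbound'⟩ := exists_next_halving_time hτ hanti h0 hhalf hT hgT
    refine ⟨T', by push_cast; linarith, hgT', fun t ht => ?_⟩
    rcases le_total t T with htT | hTt
    · exact hbound t ⟨ht.1, htT⟩
    · exact hbound' t ⟨hTt, ht.2⟩

lemma AntitoneOn.mul_le_two_mul_of_halving (hτ : 0 < τ) (hanti : AntitoneOn g (Ici 0))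
    (h0 : g 0 ≤ 1) (hhalf : ∀ s, 0 ≤ s → 0 < g s → g (s + τ / g s) ≤ g s / 2)
    {t : ℝ} (ht : 0 ≤ t) : g t * t ≤ 2 * τ := by
  obtain ⟨k, hk⟩ := exists_nat_ge (t / τ)
  obtain ⟨T, hkT, -, hbound⟩ := exists_halving_time_ge hτ.le hanti h0 hhalf k
  exact hbound t ⟨ht, by linarith [(div_le_iff₀ hτ).1 hk]⟩

end Halving

lemma energy_nonneg (X : ℕ → ℝ → ℝ) (t : ℝ) : 0 ≤ energy X t :=
  tsum_nonneg fun _ => sq_nonneg _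

noncomputable def rescale (a s : ℝ) (X : ℕ → ℝ → ℝ) : ℕ → ℝ → ℝ :=
  fun n u => a⁻¹ * X n (a⁻¹ * u + s)

lemma energy_rescale (a s : ℝ) (X : ℕ → ℝ → ℝ) (u : ℝ) :
    energy (rescale a s X) u = (a ^ 2)⁻¹ * energy X (a⁻¹ * u + s) := by
  simp only [energy, rescale, mul_pow, inv_pow, tsum_mul_left]

section Rescale

variable {X : ℕ → ℝ → ℝ} {a s : ℝ}

lemma IsDyadicSol.rescale (hX : IsDyadicSol X) (ha : 0 < a) (hs : 0 ≤ s) :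
    IsDyadicSol (rescale a s X) := by
  have hmem : ∀ u : ℝ, 0 ≤ u → 0 ≤ a⁻¹ * u + s := fun u hu => by positivity
  refine ⟨fun t ht => by simp [_root_.rescale, hX.1 _ (hmem t ht)], fun n t ht => ?_⟩
  have hinner : HasDerivAt (fun u : ℝ => a⁻¹ * u + s) a⁻¹ t := by
    simpa using ((hasDerivAt_id t).const_mul a⁻¹).add_const s
  refine (((hX.2 n _ (hmem t ht)).comp t hinner).const_mul a⁻¹).congr_deriv ?_
  simp only [_root_.rescale]
  ring

lemma IsPosFE.rescale (hX : IsPosFE X) (ha : 0 < a) (hs : 0 ≤ s) :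
    IsPosFE (rescale a s X) := by
  have hmem : ∀ u : ℝ, 0 ≤ u → 0 ≤ a⁻¹ * u + s := fun u hu => by positivity
  refine ⟨hX.1.rescale ha hs, fun n t ht => ?_, fun t ht => ?_⟩
  · exact mul_nonneg (inv_nonneg.2 ha.le) (hX.2.1 n _ (hmem t ht))
  · simpa only [_root_.rescale, mul_pow] using (hX.2.2 _ (hmem t ht)).mul_left (a⁻¹ ^ 2)

end Rescale

lemma sqrt_energy_add_div_le {tb : ℝ}
    (Hhalf : ∀ X : ℕ → ℝ → ℝ, IsPosFE X → energy X 0 = 1 → energy X tb ≤ 1 / 4)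
    {X : ℕ → ℝ → ℝ} (hX : IsPosFE X) {s : ℝ} (hs : 0 ≤ s) (hpos : 0 < √(energy X s)) :
    √(energy X (s + tb / √(energy X s))) ≤ √(energy X s) / 2 := by
  set a := √(energy X s)
  have hE : energy X s = a ^ 2 := (Real.sq_sqrt (energy_nonneg X s)).symm
  have hunit : energy (rescale a s X) 0 = 1 := by
    rw [energy_rescale, mul_zero, zero_add, hE, inv_mul_cancel₀ (by positivity)]
  have hquarter := Hhalf _ (hX.rescale hpos hs) hunit
  rw [energy_rescale, inv_mul_le_iff₀ (by positivity), inv_mul_eq_div, add_comm] at hquarter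
  rw [Real.sqrt_le_left (by positivity)]
  linarith

/-- Decay of energy like `t⁻²`: if every positive finite-energy solution of unit
initial energy halves its energy (squared norm `≤ 1/4`) by a fixed time `t̄`, and
energy is nonincreasing, then every such solution satisfies
`|X(t)|² ≤ 4 t̄² / t²` for `t ≥ 2 t̄`. -/
theorem dyadic_energy_decay (tb : ℝ) (htb : 0 < tb)
    (Hhalf : ∀ X : ℕ → ℝ → ℝ, IsPosFE X → energy X 0 = 1 → energy X tb ≤ 1 / 4)
    (Hmono : ∀ X : ℕ → ℝ → ℝ, IsPosFE X →
      ∀ s t : ℝ, 0 ≤ s → s ≤ t → energy X t ≤ energy X s)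
    (X : ℕ → ℝ → ℝ) (hX : IsPosFE X) (hX1 : energy X 0 = 1) :
    ∀ t : ℝ, 2 * tb ≤ t → energy X t ≤ 4 * tb ^ 2 / t ^ 2 := by
  intro t ht
  have ht0 : 0 < t := by linarith
  have hanti : AntitoneOn (fun t => √(energy X t)) (Ici 0) := fun s hs u _ hsu =>
    Real.sqrt_le_sqrt (Hmono X hX s u hs hsu)
  have hnorm : √(energy X t) * t ≤ 2 * tb :=
    hanti.mul_le_two_mul_of_halving htb (by simp [hX1])
      (fun s hs hpos => sqrt_energy_add_div_le Hhalf hX hs hpos) ht0.le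
  rw [le_div_iff₀ (by positivity)]
  calc energy X t * t ^ 2 = (√(energy X t) * t) ^ 2 := by
        rw [mul_pow, Real.sq_sqrt (energy_nonneg X t)]
    _ ≤ (2 * tb) ^ 2 := pow_le_pow_left₀ (by positivity) hnorm 2
    _ = 4 * tb ^ 2 := by ring
end

section
/- Let X be a positive componentwise solution of the dyadic model such that X_n(t) ≤ C/t for all t ≥ 1 and all n (for some constant C > 0), and suppose X_n(1) > 0 for some fixed n. Then ∫_1^t X_{n+1}(s) ds ≥ k_n^{-1} log t + k_n^{-1} log(X_n(1)/C) for all t ≥ 1. Consequently ∫_1^∞ X_{n+1}(s) ds = ∞ and limsup_{t→∞} t · X_{n+1}(t) ≥ k_n^{-1}. -/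
/-!
For `n ≥ 1`, `exp (k_n ∫_1^t X_{n+1})` is an integrating factor: the product
`X_n(t) · exp (k_n ∫_1^t X_{n+1})` has derivative `k_{n-1} X_{n-1}(t)² · exp (…) ≥ 0`, so it
never drops below `X_n(1)`. Together with `X_n(t) ≤ C/t`, taking logarithms gives
`k_n ∫_1^t X_{n+1} ≥ log t + log (X_n(1)/C)`. If `t · X_{n+1}(t)` stayed eventually below some
`a < k_n⁻¹`, the integral would grow at most like `a log t`, contradicting that bound.
-/

open intervalIntegral Filter

open Set Real

theorem le_mul_exp_integral_of_hasDerivAt {f g h : ℝ → ℝ} {a b k : ℝ} (hab : a ≤ b)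
    (hf : ∀ t ∈ Icc a b, HasDerivAt f (g t - k * f t * h t) t)
    (hg : ∀ t ∈ Ioo a b, 0 ≤ g t) (hh : ContinuousOn h (Icc a b)) :
    f a ≤ f b * exp (k * ∫ s in a..b, h s) := by
  set I : ℝ → ℝ := fun u => ∫ s in a..u, h s
  have hI_cont : ContinuousOn I (Icc a b) := by
    rw [← uIcc_of_le hab] at hh ⊢
    exact continuousOn_primitive_interval (hh.integrableOn_compact isCompact_uIcc)
  have hI_deriv : ∀ t ∈ Ioo a b, HasDerivAt I (h t) t := fun t ht =>
    integral_hasDerivAt_right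
      ((hh.mono (uIcc_subset_Icc (left_mem_Icc.2 hab) (Ioo_subset_Icc_self ht))).intervalIntegrable)
      ((hh.mono Ioo_subset_Icc_self).stronglyMeasurableAtFilter isOpen_Ioo t ht)
      (hh.continuousAt (Icc_mem_nhds ht.1 ht.2))
  have hmono : MonotoneOn (fun t => f t * exp (k * I t)) (Icc a b) := by
    refine monotoneOn_of_hasDerivWithinAt_nonneg (f' := fun t => g t * exp (k * I t))
      (convex_Icc a b)
      (fun t ht => (hf t ht).continuousAt.continuousWithinAt.mul
        ((hI_cont t ht).const_smul k).rexp) (fun t ht => ?_) (fun t ht => ?_)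
    · rw [interior_Icc] at ht
      refine (((hf t (Ioo_subset_Icc_self ht)).mul
        ((hI_deriv t ht).const_mul k).exp).congr_deriv ?_).hasDerivWithinAt
      ring
    · rw [interior_Icc] at ht
      exact mul_nonneg (hg t ht) (exp_pos _).le
  simpa [I] using hmono (left_mem_Icc.2 hab) (right_mem_Icc.2 hab) hab

theorem log_le_of_le_div_mul_exp {x₀ C t k I : ℝ} (hx₀ : 0 < x₀) (ht : 0 < t) (hk : 0 < k)
    (h : x₀ ≤ C / t * exp (k * I)) : k⁻¹ * log t + k⁻¹ * log (x₀ / C) ≤ I := by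
  have hC : 0 < C := by
    have : 0 < C / t := pos_of_mul_pos_left (hx₀.trans_le h) (exp_pos _).le
    exact (div_pos_iff_of_pos_right ht).1 this
  have hlog : log (t * (x₀ / C)) ≤ k * I := by
    rw [log_le_iff_le_exp (by positivity)]
    calc t * (x₀ / C) ≤ t * (C / t * exp (k * I) / C) := by gcongr
      _ = exp (k * I) := by field_simp
  rw [log_mul ht.ne' (by positivity)] at hlog
  rw [← mul_add, inv_mul_le_iff₀ hk]
  exact hlog

theorem exists_integral_le_mul_log_add {φ : ℝ → ℝ} {a b : ℝ} (hφ : ContinuousOn φ (Ici b))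
    (h : ∀ᶠ t in atTop, t * φ t ≤ a) :
    ∃ B, ∀ᶠ t in atTop, ∫ s in b..t, φ s ≤ a * log t + B := by
  obtain ⟨T₀, hT₀⟩ := eventually_atTop.1 h
  set T := max T₀ (max b 1)
  have hbT : b ≤ T := (le_max_left b 1).trans (le_max_right _ _)
  have hT : 0 < T := zero_lt_one.trans_le ((le_max_right b 1).trans (le_max_right _ _))
  have hint : ∀ u v, b ≤ u → b ≤ v → IntervalIntegrable φ MeasureTheory.volume u v :=
    fun u v hu hv => (hφ.mono fun s hs => (le_min hu hv).trans hs.1).intervalIntegrable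
  refine ⟨(∫ s in b..T, φ s) - a * log T, ?_⟩
  filter_upwards [eventually_ge_atTop T] with t ht
  have htail : ∫ s in T..t, φ s ≤ ∫ s in T..t, a * s⁻¹ := by
    refine integral_mono_on ht (hint T t hbT (hbT.trans ht)) ?_ fun s hs => ?_
    · exact (continuousOn_const.mul (continuousOn_inv₀.mono fun s hs =>
        (hT.trans_le (le_min le_rfl ht |>.trans hs.1)).ne')).intervalIntegrable
    · have hs0 : 0 < s := hT.trans_le hs.1
      rw [← div_eq_mul_inv, le_div_iff₀ hs0, mul_comm]
      exact hT₀ s ((le_max_left _ _).trans hs.1)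
  rw [← integral_add_adjacent_intervals (hint b T le_rfl hbT) (hint T t hbT (hbT.trans ht))]
  rw [integral_const_mul, integral_inv_of_pos hT (hT.trans_le ht),
    log_div (hT.trans_le ht).ne' hT.ne'] at htail
  linarith

theorem le_of_eventually_mul_log_add_le {a c d B : ℝ}
    (h : ∀ᶠ t in atTop, c * log t + d ≤ a * log t + B) : c ≤ a := by
  by_contra! hac
  have hgrow : Tendsto (fun t => (c - a) * log t) atTop atTop :=
    tendsto_log_atTop.const_mul_atTop (sub_pos.2 hac)
  obtain ⟨t, ht, hbig⟩ := (h.and (hgrow.eventually_gt_atTop (B - d))).exists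
  nlinarith

theorem le_limsup_mul_of_mul_log_add_le_integral {φ : ℝ → ℝ} {b c d : ℝ}
    (hφ : ContinuousOn φ (Ici b))
    (hbdd : IsBoundedUnder (· ≤ ·) atTop fun t => t * φ t)
    (hlow : ∀ᶠ t in atTop, c * log t + d ≤ ∫ s in b..t, φ s) :
    c ≤ limsup (fun t => t * φ t) atTop := by
  by_contra! hlt
  obtain ⟨a, hlim, hac⟩ := exists_between hlt
  obtain ⟨B, hB⟩ := exists_integral_le_mul_log_add hφ
    ((eventually_lt_of_limsup_lt hlim hbdd).mono fun _ => le_of_lt)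
  exact hac.not_ge (le_of_eventually_mul_log_add_le ((hlow.and hB).mono fun _ h => h.1.trans h.2))

theorem dyadic_integral_lower_bound_general (X : ℕ → ℝ → ℝ) (hX : IsDyadicSol X)
    (C : ℝ)
    (hdecay : ∀ n : ℕ, ∀ t : ℝ, 1 ≤ t → X n t ≤ C / t)
    (n : ℕ) (hn1 : 0 < X n 1) :
    (∀ t : ℝ, 1 ≤ t →
      ((2 : ℝ) ^ n)⁻¹ * Real.log t + ((2 : ℝ) ^ n)⁻¹ * Real.log (X n 1 / C)
        ≤ ∫ s in (1:ℝ)..t, X (n + 1) s)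
    ∧ Tendsto (fun t : ℝ => ∫ s in (1:ℝ)..t, X (n + 1) s) atTop atTop
    ∧ ((2 : ℝ) ^ n)⁻¹ ≤ Filter.limsup (fun t : ℝ => t * X (n + 1) t) atTop := by
  obtain ⟨hX₀, hode⟩ := hX
  obtain _ | m := n
  · exact absurd hn1 (by simp [hX₀ 1 zero_le_one])
  have hcont : ContinuousOn (X (m + 2)) (Ici 1) := fun t ht =>
    (hode (m + 1) t (zero_le_one.trans ht)).continuousAt.continuousWithinAt
  have hlower : ∀ t : ℝ, 1 ≤ t → ((2 : ℝ) ^ (m + 1))⁻¹ * log t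
      + ((2 : ℝ) ^ (m + 1))⁻¹ * log (X (m + 1) 1 / C) ≤ ∫ s in (1:ℝ)..t, X (m + 2) s :=
    fun t ht => log_le_of_le_div_mul_exp hn1 (zero_lt_one.trans_le ht) (by positivity) <|
      (le_mul_exp_integral_of_hasDerivAt ht (fun s hs => hode m s (zero_le_one.trans hs.1))
        (fun s _ => by positivity) (hcont.mono Icc_subset_Ici_self)).trans
      (mul_le_mul_of_nonneg_right (hdecay _ t ht) (exp_pos _).le)
  refine ⟨hlower, ?_, ?_⟩
  · exact tendsto_atTop_mono' atTop (eventually_atTop.2 ⟨1, hlower⟩) <|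
      tendsto_atTop_add_const_right _ _ (tendsto_log_atTop.const_mul_atTop (by positivity))
  · refine le_limsup_mul_of_mul_log_add_le_integral hcont
      (isBoundedUnder_of_eventually_le (a := C) ?_) (eventually_atTop.2 ⟨1, hlower⟩)
    filter_upwards [eventually_ge_atTop 1] with t ht
    rw [← le_div_iff₀' (zero_lt_one.trans_le ht)]
    exact hdecay _ t ht

/-- Lower bound for the time integral of a component: if the solution decays like
`C/t` and `X_n(1) > 0`, then `∫_1^t X_{n+1} ≥ k_n⁻¹ log t + k_n⁻¹ log (X_n(1)/C)`;
hence `∫_1^∞ X_{n+1} = ∞` and `limsup t X_{n+1}(t) ≥ k_n⁻¹`. -/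
theorem dyadic_integral_lower_bound (X : ℕ → ℝ → ℝ) (hX : IsDyadicSol X)
    (hpos : ∀ n : ℕ, ∀ t : ℝ, 0 ≤ t → 0 ≤ X n t)
    (C : ℝ) (hC : 0 < C)
    (hdecay : ∀ n : ℕ, ∀ t : ℝ, 1 ≤ t → X n t ≤ C / t)
    (n : ℕ) (hn : 1 ≤ n) (hn1 : 0 < X n 1) :
    (∀ t : ℝ, 1 ≤ t →
      ((2 : ℝ) ^ n)⁻¹ * Real.log t + ((2 : ℝ) ^ n)⁻¹ * Real.log (X n 1 / C)
        ≤ ∫ s in (1:ℝ)..t, X (n + 1) s)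
    ∧ Tendsto (fun t : ℝ => ∫ s in (1:ℝ)..t, X (n + 1) s) atTop atTop
    ∧ ((2 : ℝ) ^ n)⁻¹ ≤ Filter.limsup (fun t : ℝ => t * X (n + 1) t) atTop :=
  dyadic_integral_lower_bound_general X hX C hdecay n hn1
end

section
/- Define D_0 = d_0 > 0, D_1 = d_1 ≥ 0, and D_{k+1} = M Σ_{i=0}^k D_i D_{k-i} for k ≥ 1, where M > 0. Then the generating function G(z) = Σ_{k≥0} D_k z^k satisfies G(z) = (1 - √(1 - 4 M d_0 z + 4 A M² d_0² z²))/(2Mz) where A = 1 - d_1/(M d_0²) ... [with A defined so that M d_0² A = M d_0² - d_1], and the radius of convergence of G equals the smaller root z_1 = (1 - √(1 - A))/(2 A M d_0) of the radicand when 0 < A < 1, with both roots real and positive. -/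
/-!
Writing `G(z) = ∑ D_k z^k`, the recursion says `G = d₀ + d₁ z + M z (G² - d₀²)` wherever the
series converges absolutely, i.e. `(1 - 2 M z G)² = 1 - 4 M d₀ z + 4 A M² d₀² z²`. For
`0 < w ≤ z₁` the smaller root `L(w)` of this quadratic in `G` is real and at least `d₀`; since
the partial sums of the self-convolution of `(D_k w^k)` are at most the squares of its partial
sums, the recursion propagates the bound `∑_{k<n} D_k w^k ≤ L(w)` from `n` to `n + 1`. This gives
absolute convergence on `|z| ≤ z₁`, and `|G(z)| ≤ G(|z|) ≤ L(|z|)` selects the sign of the square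
root. For `z > z₁`, convergence at `z` would give a real solution `G(w)` of the quadratic at some
`w ∈ (z₁, z₂)`, where the radicand is negative.
-/

open Finset Filter

def selfConv {R : Type*} [Semiring R] (a : ℕ → R) (n : ℕ) : R :=
  ∑ i ∈ range (n + 1), a i * a (n - i)

lemma selfConv_mul_pow {R : Type*} [CommSemiring R] (a : ℕ → R) (w : R) (n : ℕ) :
    selfConv (fun k => a k * w ^ k) n = selfConv a n * w ^ n := by
  rw [selfConv, selfConv, sum_mul]
  refine sum_congr rfl fun i hi => ?_
  rw [← pow_mul_pow_sub w (Nat.lt_succ_iff.mp (mem_range.mp hi))]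
  ring

lemma sum_range_selfConv_le_sq {R : Type*} [CommSemiring R] [PartialOrder R] [IsOrderedRing R]
    {a : ℕ → R} (ha : ∀ i, 0 ≤ a i) (n : ℕ) :
    ∑ j ∈ range n, selfConv a j ≤ (∑ i ∈ range n, a i) ^ 2 := by
  rw [sq, sum_mul_sum]
  simp only [selfConv]
  rw [sum_range_diag_flip n fun i k => a i * a k]
  gcongr with i
  · exact fun k _ _ => mul_nonneg (ha i) (ha k)
  · exact n.sub_le i

lemma hasSum_selfConv {R : Type*} [NormedRing R] [CompleteSpace R] {a : ℕ → R}
    (ha : Summable fun n => ‖a n‖) : HasSum (selfConv a) ((∑' n, a n) ^ 2) := by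
  rw [sq]
  exact hasSum_sum_range_mul_of_summable_norm ha ha

namespace CatalanLike

def radicand (M d₀ A z : ℝ) : ℝ := 1 - 4 * M * d₀ * z + 4 * A * M ^ 2 * d₀ ^ 2 * z ^ 2

noncomputable def smallRoot (M d₀ A : ℝ) : ℝ := (1 - √(1 - A)) / (2 * A * M * d₀)

noncomputable def largeRoot (M d₀ A : ℝ) : ℝ := (1 + √(1 - A)) / (2 * A * M * d₀)

noncomputable def genFun (M d₀ A z : ℝ) : ℝ := (1 - √(radicand M d₀ A z)) / (2 * M * z)

variable {M d₀ A : ℝ}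

lemma radicand_eq_mul_sub_mul_sub (hM : M ≠ 0) (hd₀ : d₀ ≠ 0) (hA0 : A ≠ 0) (hA1 : A ≤ 1)
    (z : ℝ) :
    radicand M d₀ A z
      = 4 * A * M ^ 2 * d₀ ^ 2 * ((z - smallRoot M d₀ A) * (z - largeRoot M d₀ A)) := by
  have hs := Real.sq_sqrt (sub_nonneg.2 hA1)
  unfold radicand smallRoot largeRoot
  field_simp
  linear_combination 4 * hs

lemma smallRoot_pos (hM : 0 < M) (hd₀ : 0 < d₀) (hA0 : 0 < A) :
    0 < smallRoot M d₀ A := by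
  have : √(1 - A) < 1 := (Real.sqrt_lt' one_pos).2 (by linarith)
  unfold smallRoot
  exact div_pos (by linarith) (by positivity)

lemma smallRoot_lt_largeRoot (hM : 0 < M) (hd₀ : 0 < d₀) (hA0 : 0 < A) (hA1 : A < 1) :
    smallRoot M d₀ A < largeRoot M d₀ A := by
  have : 0 < √(1 - A) := Real.sqrt_pos.2 (by linarith)
  unfold smallRoot largeRoot
  gcongr
  linarith

lemma radicand_smallRoot (hM : M ≠ 0) (hd₀ : d₀ ≠ 0) (hA0 : A ≠ 0) (hA1 : A ≤ 1) :
    radicand M d₀ A (smallRoot M d₀ A) = 0 := by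
  simp [radicand_eq_mul_sub_mul_sub hM hd₀ hA0 hA1]

lemma radicand_pos (hM : 0 < M) (hd₀ : 0 < d₀) (hA0 : 0 < A) (hA1 : A < 1) {z : ℝ}
    (hz : z < smallRoot M d₀ A) : 0 < radicand M d₀ A z := by
  have := smallRoot_lt_largeRoot hM hd₀ hA0 hA1
  rw [radicand_eq_mul_sub_mul_sub hM.ne' hd₀.ne' hA0.ne' hA1.le]
  exact mul_pos (by positivity) (mul_pos_of_neg_of_neg (by linarith) (by linarith))

lemma radicand_neg (hM : 0 < M) (hd₀ : 0 < d₀) (hA0 : 0 < A) (hA1 : A < 1) {z : ℝ}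
    (hz₁ : smallRoot M d₀ A < z) (hz₂ : z < largeRoot M d₀ A) : radicand M d₀ A z < 0 := by
  rw [radicand_eq_mul_sub_mul_sub hM.ne' hd₀.ne' hA0.ne' hA1.le]
  exact mul_neg_of_pos_of_neg (by positivity) (mul_neg_of_pos_of_neg (by linarith) (by linarith))

lemma radicand_nonneg (hM : 0 < M) (hd₀ : 0 < d₀) (hA0 : 0 < A) (hA1 : A < 1) {z : ℝ}
    (hz : z ≤ smallRoot M d₀ A) : 0 ≤ radicand M d₀ A z := by
  rcases hz.lt_or_eq with hz | rfl
  · exact (radicand_pos hM hd₀ hA0 hA1 hz).le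
  · exact (radicand_smallRoot hM.ne' hd₀.ne' hA0.ne' hA1.le).ge

lemma genFun_functional_equation (hM : M ≠ 0) {z : ℝ} (hz : z ≠ 0) (h : 0 ≤ radicand M d₀ A z) :
    d₀ + (1 - A) * (M * d₀ ^ 2) * z + M * z * (genFun M d₀ A z ^ 2 - d₀ ^ 2)
      = genFun M d₀ A z := by
  have hs := Real.sq_sqrt h
  unfold genFun
  generalize √(radicand M d₀ A z) = q at hs ⊢
  unfold radicand at hs
  field_simp
  linear_combination hs

lemma le_genFun (hM : 0 < M) (hd₀ : 0 < d₀) (hA0 : 0 < A) (hA1 : A < 1) {w : ℝ} (hw : 0 < w)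
    (hw₁ : w ≤ smallRoot M d₀ A) : d₀ ≤ genFun M d₀ A w := by
  have hs := Real.sq_sqrt (sub_nonneg.2 hA1.le)
  have h₁ : 2 * M * d₀ * w ≤ 1 := calc
    2 * M * d₀ * w ≤ 2 * M * d₀ * smallRoot M d₀ A := by gcongr
    _ = (1 - √(1 - A)) / A := by unfold smallRoot; field_simp
    _ ≤ 1 := by
      rw [div_le_one hA0]
      nlinarith [Real.sqrt_nonneg (1 - A), Real.sqrt_le_one.mpr (by linarith : 1 - A ≤ 1)]
  rw [genFun, le_div_iff₀ (by positivity), le_sub_comm, Real.sqrt_le_iff]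
  refine ⟨by linarith, ?_⟩
  unfold radicand
  nlinarith [sq_nonneg (M * d₀ * w)]

end CatalanLike

lemma norm_mul_pow_of_nonneg {d : ℝ} (hd : 0 ≤ d) (z : ℝ) (k : ℕ) :
    ‖d * z ^ k‖ = d * |z| ^ k := by
  rw [Real.norm_eq_abs, abs_mul, abs_pow, abs_of_nonneg hd]

structure IsCatalanLike {R : Type*} [CommRing R] (M d₀ d₁ : R) (D : ℕ → R) : Prop where
  zero : D 0 = d₀
  one : D 1 = d₁
  succ : ∀ k, 1 ≤ k → D (k + 1) = M * selfConv D k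

namespace IsCatalanLike

section CommRing

variable {R : Type*} [CommRing R] {M d₀ d₁ : R} {D : ℕ → R}

lemma sum_range_add_two (hD : IsCatalanLike M d₀ d₁ D) (w : R) (m : ℕ) :
    ∑ k ∈ range (m + 2), D k * w ^ k
      = d₀ + d₁ * w
        + M * w * (∑ j ∈ range (m + 1), selfConv (fun k => D k * w ^ k) j - d₀ ^ 2) := by
  have hsucc : ∀ k, D (k + 2) * w ^ (k + 2) = M * w * (selfConv D (k + 1) * w ^ (k + 1)) := by
    intro k
    rw [hD.succ (k + 1) le_add_self]
    ring
  simp only [sum_range_succ' _ (m + 1), sum_range_succ' _ m, selfConv_mul_pow, hsucc,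
    ← mul_sum, hD.zero, hD.one]
  simp only [selfConv, zero_add, pow_one, pow_zero, mul_one, range_one, zero_tsub, hD.zero,
    sum_singleton]
  ring

end CommRing

lemma tsum_functional_equation {R : Type*} [NormedCommRing R] [CompleteSpace R]
    {M d₀ d₁ : R} {D : ℕ → R} (hD : IsCatalanLike M d₀ d₁ D) {z : R}
    (hz : Summable fun k => ‖D k * z ^ k‖) :
    ∑' k, D k * z ^ k = d₀ + d₁ * z + M * z * ((∑' k, D k * z ^ k) ^ 2 - d₀ ^ 2) := by
  have hG := hz.of_norm.hasSum.tendsto_sum_nat.comp (tendsto_add_atTop_nat 2)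
  have hC := (hasSum_selfConv hz).tendsto_sum_nat.comp (tendsto_add_atTop_nat 1)
  refine tendsto_nhds_unique hG ?_
  simp only [Function.comp_def, hD.sum_range_add_two]
  exact tendsto_const_nhds.add (tendsto_const_nhds.mul (hC.sub_const _))

section Real

open CatalanLike

variable {M d₀ d₁ A : ℝ} {D : ℕ → ℝ}

lemma nonneg (hD : IsCatalanLike M d₀ d₁ D) (hM : 0 ≤ M) (hd₀ : 0 ≤ d₀) (hd₁ : 0 ≤ d₁) (k : ℕ) :
    0 ≤ D k := by
  induction k using Nat.strong_induction_on with
  | _ k ih =>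
    match k, ih with
    | 0, _ => exact hD.zero ▸ hd₀
    | 1, _ => exact hD.one ▸ hd₁
    | k + 2, ih =>
      rw [hD.succ (k + 1) le_add_self]
      refine mul_nonneg hM (sum_nonneg fun i hi => ?_)
      have := mem_range.1 hi
      exact mul_nonneg (ih i (by omega)) (ih _ (by omega))

lemma sum_range_le_of_supersolution (hD : IsCatalanLike M d₀ d₁ D) (hnn : ∀ k, 0 ≤ D k)
    (hM : 0 ≤ M) {w L : ℝ} (hw : 0 ≤ w) (h₀ : d₀ ≤ L)
    (hL : d₀ + d₁ * w + M * w * (L ^ 2 - d₀ ^ 2) ≤ L) :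
    ∀ n, ∑ k ∈ range n, D k * w ^ k ≤ L
  | 0 => by simpa using (hD.zero ▸ hnn 0).trans h₀
  | 1 => by simpa [hD.zero] using h₀
  | m + 2 => by
    have hterm : ∀ k, 0 ≤ D k * w ^ k := fun k => mul_nonneg (hnn k) (pow_nonneg hw k)
    have ih := sum_range_le_of_supersolution hD hnn hM hw h₀ hL (m + 1)
    have hS : 0 ≤ ∑ k ∈ range (m + 1), D k * w ^ k := sum_nonneg fun k _ => hterm k
    calc ∑ k ∈ range (m + 2), D k * w ^ k
        = d₀ + d₁ * w
          + M * w * (∑ j ∈ range (m + 1), selfConv (fun k => D k * w ^ k) j - d₀ ^ 2) :=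
          hD.sum_range_add_two w m
      _ ≤ d₀ + d₁ * w + M * w * ((∑ k ∈ range (m + 1), D k * w ^ k) ^ 2 - d₀ ^ 2) := by
          gcongr
          exact sum_range_selfConv_le_sq hterm _
      _ ≤ d₀ + d₁ * w + M * w * (L ^ 2 - d₀ ^ 2) := by gcongr
      _ ≤ L := hL

lemma sq_one_sub_tsum_eq_radicand (hD : IsCatalanLike M d₀ d₁ D)
    (hd₁ : d₁ = (1 - A) * (M * d₀ ^ 2)) {z : ℝ} (hz : Summable fun k => ‖D k * z ^ k‖) :
    (1 - 2 * M * z * ∑' k, D k * z ^ k) ^ 2 = radicand M d₀ A z := by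
  have hG := hD.tsum_functional_equation hz
  rw [hd₁] at hG
  unfold radicand
  linear_combination (-4 * M * z) * hG

lemma sum_range_le_genFun (hD : IsCatalanLike M d₀ d₁ D) (hnn : ∀ k, 0 ≤ D k) (hM : 0 < M)
    (hd₀ : 0 < d₀) (hA0 : 0 < A) (hA1 : A < 1) (hd₁ : d₁ = (1 - A) * (M * d₀ ^ 2)) {w : ℝ}
    (hw : 0 < w) (hw₁ : w ≤ smallRoot M d₀ A) (n : ℕ) :
    ∑ k ∈ range n, D k * w ^ k ≤ genFun M d₀ A w := by
  refine hD.sum_range_le_of_supersolution hnn hM.le hw.le (le_genFun hM hd₀ hA0 hA1 hw hw₁) ?_ n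
  rw [hd₁, genFun_functional_equation hM.ne' hw.ne' (radicand_nonneg hM hd₀ hA0 hA1 hw₁)]

lemma summable_norm_of_abs_le (hD : IsCatalanLike M d₀ d₁ D) (hnn : ∀ k, 0 ≤ D k) (hM : 0 < M)
    (hd₀ : 0 < d₀) (hA0 : 0 < A) (hA1 : A < 1) (hd₁ : d₁ = (1 - A) * (M * d₀ ^ 2)) {z : ℝ}
    (hz : |z| ≤ smallRoot M d₀ A) : Summable fun k => ‖D k * z ^ k‖ := by
  have hz₁ := smallRoot_pos hM hd₀ hA0
  have hsum : Summable fun k => D k * smallRoot M d₀ A ^ k :=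
    summable_of_sum_range_le (fun k => mul_nonneg (hnn k) (pow_nonneg hz₁.le k))
      (hD.sum_range_le_genFun hnn hM hd₀ hA0 hA1 hd₁ hz₁ le_rfl)
  refine hsum.of_nonneg_of_le (fun k => norm_nonneg _) fun k => ?_
  rw [norm_mul_pow_of_nonneg (hnn k)]
  gcongr
  exact hnn k

lemma tsum_eq_genFun (hD : IsCatalanLike M d₀ d₁ D) (hnn : ∀ k, 0 ≤ D k) (hM : 0 < M)
    (hd₀ : 0 < d₀) (hA0 : 0 < A) (hA1 : A < 1) (hd₁ : d₁ = (1 - A) * (M * d₀ ^ 2)) {z : ℝ}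
    (hz : |z| < smallRoot M d₀ A) (hz₀ : z ≠ 0) :
    ∑' k, D k * z ^ k = genFun M d₀ A z := by
  set G := ∑' k, D k * z ^ k
  have hsum := hD.summable_norm_of_abs_le hnn hM hd₀ hA0 hA1 hd₁ hz.le
  have habs : |G| ≤ genFun M d₀ A |z| := calc
    |G| ≤ ∑' k, ‖D k * z ^ k‖ := norm_tsum_le_tsum_norm hsum
    _ = ∑' k, D k * |z| ^ k := tsum_congr fun k => norm_mul_pow_of_nonneg (hnn k) z k
    _ ≤ genFun M d₀ A |z| :=
      (hsum.congr fun k => norm_mul_pow_of_nonneg (hnn k) z k).tsum_le_of_sum_range_le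
        (hD.sum_range_le_genFun hnn hM hd₀ hA0 hA1 hd₁ (abs_pos.2 hz₀) hz.le)
  have hzG : 2 * M * z * G < 1 := calc
    2 * M * z * G ≤ |2 * M * z * G| := le_abs_self _
    _ = 2 * M * |z| * |G| := by simp [abs_mul, abs_of_pos hM]
    _ ≤ 2 * M * |z| * genFun M d₀ A |z| := by gcongr
    _ = 1 - √(radicand M d₀ A |z|) := by unfold genFun; field_simp
    _ < 1 := sub_lt_self _ (Real.sqrt_pos.2 (radicand_pos hM hd₀ hA0 hA1 hz))
  rw [genFun, ← hD.sq_one_sub_tsum_eq_radicand hd₁ hsum, Real.sqrt_sq (by linarith)]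
  field_simp
  ring

lemma not_summable_of_smallRoot_lt (hD : IsCatalanLike M d₀ d₁ D) (hnn : ∀ k, 0 ≤ D k)
    (hM : 0 < M) (hd₀ : 0 < d₀) (hA0 : 0 < A) (hA1 : A < 1) (hd₁ : d₁ = (1 - A) * (M * d₀ ^ 2))
    {z : ℝ} (hz : smallRoot M d₀ A < z) : ¬ Summable fun k => D k * z ^ k := by
  intro hsum
  obtain ⟨w, hw₁, hw⟩ := exists_between (lt_min hz (smallRoot_lt_largeRoot hM hd₀ hA0 hA1))
  have hw₀ : 0 < w := (smallRoot_pos hM hd₀ hA0).trans hw₁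
  have hsumw : Summable fun k => ‖D k * w ^ k‖ := by
    refine hsum.of_nonneg_of_le (fun k => norm_nonneg _) fun k => ?_
    rw [norm_mul_pow_of_nonneg (hnn k), abs_of_pos hw₀]
    gcongr
    exacts [hnn k, (hw.trans_le (min_le_left _ _)).le]
  have hneg := radicand_neg hM hd₀ hA0 hA1 hw₁ (hw.trans_le (min_le_right _ _))
  rw [← hD.sq_one_sub_tsum_eq_radicand hd₁ hsumw] at hneg
  exact (sq_nonneg _).not_gt hneg

end Real

end IsCatalanLike

open CatalanLike

/-- Catalan-like recursion with modified first step: explicit formula for the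
generating function `G(z) = ∑ D_k z^k`, and identification of its radius of
convergence as the smaller positive root `z₁` of the radicand
`1 - 4 M d₀ z + 4 A M² d₀² z²`, where `A = 1 - d₁/(M d₀²)`. -/
theorem catalan_like_generating_function (d₀ d₁ M : ℝ)
    (hd₀ : 0 < d₀) (hd₁ : 0 ≤ d₁) (hM : 0 < M)
    (A : ℝ) (hA : A = 1 - d₁ / (M * d₀ ^ 2)) (hA0 : 0 < A) (hA1 : A < 1)
    (D : ℕ → ℝ) (hD0 : D 0 = d₀) (hD1 : D 1 = d₁)
    (hrec : ∀ k : ℕ, 1 ≤ k →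
      D (k + 1) = M * ∑ i ∈ Finset.range (k + 1), D i * D (k - i)) :
    (0 < (1 - Real.sqrt (1 - A)) / (2 * A * M * d₀)) ∧
    ((1 - Real.sqrt (1 - A)) / (2 * A * M * d₀)
      ≤ (1 + Real.sqrt (1 - A)) / (2 * A * M * d₀)) ∧
    (1 - 4 * M * d₀ * ((1 - Real.sqrt (1 - A)) / (2 * A * M * d₀))
      + 4 * A * M ^ 2 * d₀ ^ 2
          * ((1 - Real.sqrt (1 - A)) / (2 * A * M * d₀)) ^ 2 = 0) ∧
    (∀ z : ℝ, |z| < (1 - Real.sqrt (1 - A)) / (2 * A * M * d₀) →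
      Summable (fun k : ℕ => D k * z ^ k) ∧
      (z ≠ 0 → (∑' k : ℕ, D k * z ^ k)
        = (1 - Real.sqrt (1 - 4 * M * d₀ * z + 4 * A * M ^ 2 * d₀ ^ 2 * z ^ 2))
            / (2 * M * z))) ∧
    (∀ z : ℝ, (1 - Real.sqrt (1 - A)) / (2 * A * M * d₀) < z →
      ¬ Summable (fun k : ℕ => D k * z ^ k)) := by
  have hD : IsCatalanLike M d₀ d₁ D := ⟨hD0, hD1, hrec⟩
  have hd₁A : d₁ = (1 - A) * (M * d₀ ^ 2) := by
    rw [hA, sub_sub_cancel, div_mul_cancel₀ _ (by positivity)]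
  have hnn := hD.nonneg hM.le hd₀.le hd₁
  exact ⟨smallRoot_pos hM hd₀ hA0, (smallRoot_lt_largeRoot hM hd₀ hA0 hA1).le,
    radicand_smallRoot hM.ne' hd₀.ne' hA0.ne' hA1.le,
    fun z hz => ⟨(hD.summable_norm_of_abs_le hnn hM hd₀ hA0 hA1 hd₁A hz.le).of_norm,
      hD.tsum_eq_genFun hnn hM hd₀ hA0 hA1 hd₁A hz⟩,
    fun z hz => hD.not_summable_of_smallRoot_lt hnn hM hd₀ hA0 hA1 hd₁A hz⟩
end
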